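/- The series ∑_{n=0}^∞ ((q;q)_n/(pq²;q)_n)·q^n converges and equals (1−pq)·((pq;q)_∞ − (q;q)_∞)/(q·(p;q)_∞); equivalently, with m_k = q·(1−q^k)/(1+q−(1+p)·q^{k+1}) and M_0 = q·(p;q)_∞/((1−pq)·((pq;q)_∞ − (q;q)_∞)), one has 1 + ∑_{n=1}^∞ ∏_{k=1}^n (m_k/(1−m_k)) = 1/M_0. -/

import Mathlib

/-- Finite q-shifted factorial `(z;q)_n`. -/
noncomputable def qp (z q : ℝ) (n : ℕ) : ℝ := ∏ k ∈ Finset.range n, (1 - z * q ^ k)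

/-- Infinite q-shifted factorial `(z;q)_∞`. -/
noncomputable def qpInf (z q : ℝ) : ℝ := ∏' k : ℕ, (1 - z * q ^ k)

/-- The minimal parameter sequence `m_k`. -/
noncomputable def mseq (p q : ℝ) (k : ℕ) : ℝ :=
  q * (1 - q ^ k) / (1 + q - (1 + p) * q ^ (k + 1))

/-! The terms `aₙ = (q;q)ₙ / (pq²;q)ₙ · qⁿ` telescope: `aₙ = F n - F (n + 1)` for
`F n = (q;q)ₙ / (pq²;q)ₙ · (1 - p qⁿ⁺¹) / (q (1 - p))`. As `F` decreases to
`(q;q)_∞ / ((pq²;q)_∞ · q (1 - p))`, the series sums to `F 0` minus this limit, which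
`(z;q)_∞ = (1 - z) (zq;q)_∞` turns into the stated closed form. The second identity is the
first in disguise: `m_k / (1 - m_k) = q (1 - qᵏ) / (1 - p qᵏ⁺¹)`, so
`∏_{k=1}^n m_k / (1 - m_k) = aₙ`. -/

open Finset Filter Topology

lemma qp_succ (z q : ℝ) (n : ℕ) : qp z q (n + 1) = qp z q n * (1 - z * q ^ n) :=
  prod_range_succ _ _

lemma one_sub_mul_pow_pos {z q : ℝ} (hz : z < 1) (hq0 : 0 ≤ q) (hq1 : q ≤ 1) (k : ℕ) :
    0 < 1 - z * q ^ k := by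
  have hqk : q ^ k ≤ 1 := pow_le_one₀ hq0 hq1
  rcases le_or_gt 0 z with h | h
  · nlinarith
  · nlinarith [pow_nonneg hq0 k]

lemma qp_pos {z q : ℝ} (hz : z < 1) (hq0 : 0 ≤ q) (hq1 : q ≤ 1) (n : ℕ) : 0 < qp z q n :=
  prod_pos fun k _ => one_sub_mul_pow_pos hz hq0 hq1 k

lemma summable_neg_mul_pow (z : ℝ) {q : ℝ} (hq : |q| < 1) :
    Summable fun k : ℕ => -(z * q ^ k) :=
  ((summable_geometric_of_abs_lt_one hq).mul_left z).neg

lemma multipliable_one_sub_mul_pow (z : ℝ) {q : ℝ} (hq : |q| < 1) :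
    Multipliable fun k : ℕ => 1 - z * q ^ k := by
  simpa only [sub_eq_add_neg] using
    Real.multipliable_one_add_of_summable (summable_neg_mul_pow z hq)

lemma tendsto_qp_qpInf (z : ℝ) {q : ℝ} (hq : |q| < 1) :
    Tendsto (qp z q) atTop (𝓝 (qpInf z q)) :=
  (multipliable_one_sub_mul_pow z hq).hasProd.tendsto_prod_nat

lemma qpInf_eq_one_sub_mul (z : ℝ) {q : ℝ} (hq : |q| < 1) :
    qpInf z q = (1 - z) * qpInf (z * q) q := by
  have hshift : (fun k : ℕ => 1 - z * q ^ (k + 1)) = fun k => 1 - z * q * q ^ k := by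
    ext k
    ring
  rw [qpInf, qpInf, tprod_eq_zero_mul' (hshift ▸ multipliable_one_sub_mul_pow _ hq), hshift,
    pow_zero, mul_one]

lemma qpInf_pos {z q : ℝ} (hz : z < 1) (hq0 : 0 ≤ q) (hq1 : q < 1) : 0 < qpInf z q := by
  have hq : |q| < 1 := abs_lt.2 ⟨by linarith, hq1⟩
  have hlog : Summable fun k : ℕ => Real.log (1 - z * q ^ k) := by
    simpa only [sub_eq_add_neg] using
      Real.summable_log_one_add_of_summable (summable_neg_mul_pow z hq)
  rw [qpInf, ← Real.rexp_tsum_eq_tprod (one_sub_mul_pow_pos hz hq0 hq1.le) hlog]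
  exact Real.exp_pos _

lemma hasSum_sub_succ_of_antitone {f : ℕ → ℝ} {l : ℝ} (hf : Antitone f)
    (hl : Tendsto f atTop (𝓝 l)) : HasSum (fun n => f n - f (n + 1)) (f 0 - l) := by
  rw [hasSum_iff_tendsto_nat_of_nonneg fun n => sub_nonneg.2 (hf n.le_succ)]
  simp only [sum_range_sub']
  exact tendsto_const_nhds.sub hl

noncomputable def qSeriesTerm (p q : ℝ) (n : ℕ) : ℝ := qp q q n / qp (p * q ^ 2) q n * q ^ n

noncomputable def qSeriesPrimitive (p q : ℝ) (n : ℕ) : ℝ :=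
  qp q q n / qp (p * q ^ 2) q n * ((1 - p * q ^ (n + 1)) / (q * (1 - p)))

lemma qSeriesTerm_zero (p q : ℝ) : qSeriesTerm p q 0 = 1 := by
  simp [qSeriesTerm, qp]

section QSeries

variable {p q : ℝ} (hp1 : p < 1) (hq0 : 0 < q) (hq1 : q < 1)
include hp1 hq0 hq1

lemma mul_sq_lt_one : p * q ^ 2 < 1 := by
  linarith [one_sub_mul_pow_pos hp1 hq0.le hq1.le 2]

lemma qSeriesTerm_succ (n : ℕ) :
    qSeriesTerm p q (n + 1) =
      qSeriesTerm p q n * (q * (1 - q ^ (n + 1)) / (1 - p * q ^ (n + 2))) := by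
  have h1 := qp_pos (mul_sq_lt_one hp1 hq0 hq1) hq0.le hq1.le n
  have h2 := one_sub_mul_pow_pos hp1 hq0.le hq1.le (n + 1 + 1)
  simp only [qSeriesTerm, qp_succ, show p * q ^ 2 * q ^ n = p * q ^ (n + 1 + 1) by ring]
  field_simp
  ring

lemma qSeriesPrimitive_sub_succ (n : ℕ) :
    qSeriesPrimitive p q n - qSeriesPrimitive p q (n + 1) = qSeriesTerm p q n := by
  have h1 := qp_pos (mul_sq_lt_one hp1 hq0 hq1) hq0.le hq1.le n
  have h2 := one_sub_mul_pow_pos hp1 hq0.le hq1.le (n + 1 + 1)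
  have h3 : 0 < 1 - p := by linarith
  simp only [qSeriesPrimitive, qSeriesTerm, qp_succ,
    show p * q ^ 2 * q ^ n = p * q ^ (n + 1 + 1) by ring]
  field_simp
  ring

lemma antitone_qSeriesPrimitive : Antitone (qSeriesPrimitive p q) := by
  refine antitone_nat_of_succ_le fun n => sub_nonneg.1 ?_
  have := qp_pos hq1 hq0.le hq1.le n
  have := qp_pos (mul_sq_lt_one hp1 hq0 hq1) hq0.le hq1.le n
  rw [qSeriesPrimitive_sub_succ hp1 hq0 hq1, qSeriesTerm]
  positivity

lemma tendsto_qSeriesPrimitive :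
    Tendsto (qSeriesPrimitive p q) atTop
      (𝓝 (qpInf q q / qpInf (p * q ^ 2) q / (q * (1 - p)))) := by
  have hq : |q| < 1 := abs_lt.2 ⟨by linarith, hq1⟩
  have hpow : Tendsto (fun n : ℕ => q ^ (n + 1)) atTop (𝓝 0) :=
    (tendsto_pow_atTop_nhds_zero_of_lt_one hq0.le hq1).comp (tendsto_add_atTop_nat 1)
  have hlim := qpInf_pos (mul_sq_lt_one hp1 hq0 hq1) hq0.le hq1
  convert ((tendsto_qp_qpInf q hq).div (tendsto_qp_qpInf _ hq) hlim.ne').mul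
    (((tendsto_const_nhds (x := 1)).sub (hpow.const_mul p)).div_const (q * (1 - p))) using 2
  · rfl
  · ring

lemma hasSum_qSeriesTerm : HasSum (qSeriesTerm p q)
    ((1 - p * q) * (qpInf (p * q) q - qpInf q q) / (q * qpInf p q)) := by
  have hq : |q| < 1 := abs_lt.2 ⟨by linarith, hq1⟩
  have h := hasSum_sub_succ_of_antitone (antitone_qSeriesPrimitive hp1 hq0 hq1)
    (tendsto_qSeriesPrimitive hp1 hq0 hq1)
  simp only [qSeriesPrimitive_sub_succ hp1 hq0 hq1] at h
  convert h using 1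
  have hpq : qpInf (p * q) q = (1 - p * q) * qpInf (p * q ^ 2) q := by
    rw [qpInf_eq_one_sub_mul _ hq, mul_assoc, ← sq]
  have h1 := qpInf_pos (mul_sq_lt_one hp1 hq0 hq1) hq0.le hq1
  have h2 : 0 < 1 - p := by linarith
  have h3 : 0 < 1 - p * q := by simpa using one_sub_mul_pow_pos hp1 hq0.le hq1.le 1
  rw [qpInf_eq_one_sub_mul p hq, hpq]
  simp only [qSeriesPrimitive, qp, range_zero, prod_empty]
  field_simp
  ring

lemma mseq_div_one_sub_mseq (k : ℕ) :
    mseq p q k / (1 - mseq p q k) = q * (1 - q ^ k) / (1 - p * q ^ (k + 1)) := by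
  have hqk : q ^ (k + 1) ≤ q := pow_le_of_le_one hq0.le hq1.le k.succ_ne_zero
  have hE := one_sub_mul_pow_pos hp1 hq0.le hq1.le (k + 1)
  have hD : 0 < 1 + q - (1 + p) * q ^ (k + 1) := by linarith
  have h1m : 1 - mseq p q k = (1 - p * q ^ (k + 1)) / (1 + q - (1 + p) * q ^ (k + 1)) := by
    rw [mseq]
    field_simp
    ring
  rw [h1m, mseq, div_div_div_cancel_right₀ hD.ne']

lemma prod_Icc_mseq_div_one_sub_mseq (n : ℕ) :
    ∏ k ∈ Icc 1 n, mseq p q k / (1 - mseq p q k) = qSeriesTerm p q n := by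
  induction n with
  | zero => simp [qSeriesTerm_zero]
  | succ n ih =>
    rw [prod_Icc_succ_top (by omega), ih, qSeriesTerm_succ hp1 hq0 hq1,
      mseq_div_one_sub_mseq hp1 hq0 hq1]

end QSeries

theorem stmt_16_general (p q : ℝ) (hp1 : p < 1) (hq0 : 0 < q) (hq1 : q < 1) :
    Summable (fun n : ℕ => qp q q n / qp (p * q ^ 2) q n * q ^ n) ∧
    (∑' n : ℕ, qp q q n / qp (p * q ^ 2) q n * q ^ n)
      = (1 - p * q) * (qpInf (p * q) q - qpInf q q) / (q * qpInf p q) ∧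
    Summable (fun n : ℕ =>
      ∏ k ∈ Finset.Icc 1 (n + 1), (mseq p q k / (1 - mseq p q k))) ∧
    1 + (∑' n : ℕ, ∏ k ∈ Finset.Icc 1 (n + 1), (mseq p q k / (1 - mseq p q k)))
      = 1 / (q * qpInf p q / ((1 - p * q) * (qpInf (p * q) q - qpInf q q))) := by
  have h := hasSum_qSeriesTerm hp1 hq0 hq1
  simp only [prod_Icc_mseq_div_one_sub_mseq hp1 hq0 hq1]
  refine ⟨h.summable, h.tsum_eq, (summable_nat_add_iff 1).2 h.summable, ?_⟩
  rw [one_div_div, ← h.tsum_eq, h.summable.tsum_eq_zero_add, qSeriesTerm_zero]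

theorem stmt_16 (p q : ℝ) (hp0 : 0 ≤ p) (hp1 : p < 1) (hq0 : 0 < q) (hq1 : q < 1) :
    Summable (fun n : ℕ => qp q q n / qp (p * q ^ 2) q n * q ^ n) ∧
    (∑' n : ℕ, qp q q n / qp (p * q ^ 2) q n * q ^ n)
      = (1 - p * q) * (qpInf (p * q) q - qpInf q q) / (q * qpInf p q) ∧
    Summable (fun n : ℕ =>
      ∏ k ∈ Finset.Icc 1 (n + 1), (mseq p q k / (1 - mseq p q k))) ∧
    1 + (∑' n : ℕ, ∏ k ∈ Finset.Icc 1 (n + 1), (mseq p q k / (1 - mseq p q k)))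
      = 1 / (q * qpInf p q / ((1 - p * q) * (qpInf (p * q) q - qpInf q q))) :=
  stmt_16_general p q hp1 hq0 hq1
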